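/- arXiv:2603.24417 — 3 statements merged into one kernel-verified Lean document; each statement's English description precedes it below -/
import Mathlib

section
/- For every point z on the complex sphere S²_ℂ, there exist exactly two one-dimensional complex directions [η] (i.e., lines through the origin in ℂ³) with η ≠ 0, η·η = 0 and z·η = 0; equivalently, the set of solutions η ∈ ℂ³ \ {0} to η·η = 0 and z·η = 0 is the union of exactly two distinct complex lines through the origin minus the origin. -/
/-- Bilinear dot product on ℂ³ (no conjugation). -/
def dot3 (z w : ℂ × ℂ × ℂ) : ℂ := z.1 * w.1 + z.2.1 * w.2.1 + z.2.2 * w.2.2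

def cross3 (z u : ℂ × ℂ × ℂ) : ℂ × ℂ × ℂ :=
  (z.2.1 * u.2.2 - z.2.2 * u.2.1, z.2.2 * u.1 - z.1 * u.2.2, z.1 * u.2.1 - z.2.1 * u.1)

lemma span3 (z u w : ℂ × ℂ × ℂ) (hD : dot3 (cross3 z u) (cross3 z u) = 1)
    (h1 : dot3 z w = 0) (h2 : dot3 u w = 0) (h3 : dot3 (cross3 z u) w = 0) : w = 0 := by
  obtain ⟨a,b,c⟩ := z; obtain ⟨p,q,r⟩ := u; obtain ⟨w1,w2,w3⟩ := w
  simp only [dot3, cross3] at *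
  refine Prod.ext ?_ (Prod.ext ?_ ?_)
  · show w1 = 0
    linear_combination (-w1) * hD + (q*(a*q-b*p) - r*(c*p-a*r)) * h1
      + (c*(c*p-a*r) - b*(a*q-b*p)) * h2 + (b*r-c*q) * h3
  · show w2 = 0
    linear_combination (-w2) * hD + (r*(b*r-c*q) - p*(a*q-b*p)) * h1
      + (a*(a*q-b*p) - c*(b*r-c*q)) * h2 + (c*p-a*r) * h3
  · show w3 = 0
    linear_combination (-w3) * hD + (p*(c*p-a*r) - q*(b*r-c*q)) * h1
      + (b*(b*r-c*q) - a*(c*p-a*r)) * h2 + (a*q-b*p) * h3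

lemma key (z u : ℂ × ℂ × ℂ) (hz : dot3 z z = 1) (hu : dot3 u u = 1) (hzu : dot3 z u = 0) :
    ∃ η₁ η₂ : ℂ × ℂ × ℂ,
      (η₁ ≠ 0 ∧ dot3 η₁ η₁ = 0 ∧ dot3 z η₁ = 0) ∧
      (η₂ ≠ 0 ∧ dot3 η₂ η₂ = 0 ∧ dot3 z η₂ = 0) ∧
      (∀ c : ℂ, η₁ ≠ c • η₂) ∧
      (∀ η : ℂ × ℂ × ℂ, η ≠ 0 → dot3 η η = 0 → dot3 z η = 0 →
        ∃ c : ℂ, c ≠ 0 ∧ (η = c • η₁ ∨ η = c • η₂)) := by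
  set v := cross3 z u with hv
  have lagrange : dot3 v v = dot3 z z * dot3 u u - dot3 z u ^ 2 := by
    simp only [dot3, cross3, hv]; ring
  have hvv : dot3 v v = 1 := by rw [lagrange, hz, hu, hzu]; ring
  have hzv : dot3 z v = 0 := by simp only [dot3, cross3, hv]; ring
  have huv : dot3 u v = 0 := by simp only [dot3, cross3, hv]; ring
  refine ⟨u + Complex.I • v, u - Complex.I • v, ⟨?_, ?_, ?_⟩, ⟨?_, ?_, ?_⟩, ?_, ?_⟩
  · intro h
    rw [Prod.ext_iff, Prod.ext_iff] at h
    obtain ⟨h1, h2, h3⟩ := h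
    simp only [Prod.fst_add, Prod.snd_add, Prod.smul_fst, Prod.smul_snd, smul_eq_mul,
      Prod.fst_zero, Prod.snd_zero] at h1 h2 h3
    have h2' : (2:ℂ) = 0 := by
      simp only [dot3] at hu hvv
      linear_combination (u.1 - Complex.I*v.1)*h1 + (u.2.1 - Complex.I*v.2.1)*h2
        + (u.2.2 - Complex.I*v.2.2)*h3 - hu - hvv
        + (v.1^2 + v.2.1^2 + v.2.2^2) * Complex.I_sq
    norm_num at h2'
  · simp only [dot3, Prod.fst_add, Prod.snd_add, Prod.smul_fst, Prod.smul_snd,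
      smul_eq_mul] at hu hvv huv ⊢
    linear_combination hu - hvv + 2*Complex.I*huv + (v.1^2+v.2.1^2+v.2.2^2) * Complex.I_sq
  · simp only [dot3, Prod.fst_add, Prod.snd_add, Prod.smul_fst, Prod.smul_snd,
      smul_eq_mul] at hzu hzv ⊢
    linear_combination hzu + Complex.I * hzv
  · intro h
    rw [Prod.ext_iff, Prod.ext_iff] at h
    obtain ⟨h1, h2, h3⟩ := h
    simp only [Prod.fst_sub, Prod.snd_sub, Prod.smul_fst, Prod.smul_snd, smul_eq_mul,
      Prod.fst_zero, Prod.snd_zero] at h1 h2 h3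
    have h2' : (2:ℂ) = 0 := by
      simp only [dot3] at hu hvv
      linear_combination (u.1 + Complex.I*v.1)*h1 + (u.2.1 + Complex.I*v.2.1)*h2
        + (u.2.2 + Complex.I*v.2.2)*h3 - hu - hvv
        + (v.1^2 + v.2.1^2 + v.2.2^2) * Complex.I_sq
    norm_num at h2'
  · simp only [dot3, Prod.fst_sub, Prod.snd_sub, Prod.smul_fst, Prod.smul_snd,
      smul_eq_mul] at hu hvv huv ⊢
    linear_combination hu - hvv - 2*Complex.I*huv + (v.1^2+v.2.1^2+v.2.2^2) * Complex.I_sq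
  · simp only [dot3, Prod.fst_sub, Prod.snd_sub, Prod.smul_fst, Prod.smul_snd,
      smul_eq_mul] at hzu hzv ⊢
    linear_combination hzu - Complex.I * hzv
  · intro c h
    rw [Prod.ext_iff, Prod.ext_iff] at h
    obtain ⟨h1, h2, h3⟩ := h
    simp only [Prod.fst_add, Prod.snd_add, Prod.fst_sub, Prod.snd_sub, Prod.smul_fst,
      Prod.smul_snd, smul_eq_mul] at h1 h2 h3
    simp only [dot3] at hu hvv huv
    have hc : c = 1 := by
      linear_combination -u.1*h1 - u.2.1*h2 - u.2.2*h3 - (c-1)*hu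
        + (Complex.I + c*Complex.I)*huv
    have hI : Complex.I = -Complex.I := by
      linear_combination v.1*h1 + v.2.1*h2 + v.2.2*h3 + (c-1)*huv
        - (Complex.I + c*Complex.I)*hvv - Complex.I*hc
    have hI2 : Complex.I = 0 := by linear_combination hI/2
    exact Complex.I_ne_zero hI2
  · intro η hne hηη hzη
    set α := dot3 u η with hα
    set β := dot3 v η with hβ
    have hw : η - α • u - β • v = 0 := by
      apply span3 z u _ (by rw [← hv]; exact hvv)
      · simp only [dot3, Prod.fst_sub, Prod.snd_sub, Prod.smul_fst, Prod.smul_snd,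
          smul_eq_mul]
        simp only [dot3] at hzη hzu hzv
        linear_combination hzη - α*hzu - β*hzv
      · simp only [dot3, Prod.fst_sub, Prod.snd_sub, Prod.smul_fst, Prod.smul_snd,
          smul_eq_mul]
        simp only [dot3] at hα hu huv
        linear_combination -hα - α*hu - β*huv
      · rw [← hv]
        simp only [dot3, Prod.fst_sub, Prod.snd_sub, Prod.smul_fst, Prod.smul_snd,
          smul_eq_mul]
        simp only [dot3] at hβ huv hvv
        linear_combination -hβ - β*hvv - α*huv
    have hη : η = α • u + β • v := by
      have h' := hw
      rw [sub_sub, sub_eq_zero] at h'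
      exact h'
    have hab : α ^ 2 + β ^ 2 = 0 := by
      rw [hη] at hηη
      simp only [dot3, Prod.fst_add, Prod.snd_add, Prod.smul_fst, Prod.smul_snd,
        smul_eq_mul] at hηη
      simp only [dot3] at hu hvv huv
      linear_combination hηη - α^2*hu - β^2*hvv - 2*α*β*huv
    have hfac : (α + Complex.I * β) * (α - Complex.I * β) = 0 := by
      linear_combination hab - β^2 * Complex.I_sq
    have hα0 : α ≠ 0 := by
      intro h0
      have hβ0 : β = 0 := by
        rcases mul_eq_zero.mp hfac with h | h
        · linear_combination -Complex.I*h + β*Complex.I_sq + Complex.I*h0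
        · linear_combination Complex.I*h + β*Complex.I_sq - Complex.I*h0
      apply hne
      rw [hη, h0, hβ0, zero_smul, zero_smul, add_zero]
    refine ⟨α, hα0, ?_⟩
    rcases mul_eq_zero.mp hfac with h | h
    · left
      have hβα : β = Complex.I * α := by
        linear_combination -Complex.I*h + β*Complex.I_sq
      rw [hη, hβα, smul_add, smul_smul, mul_comm α Complex.I]
    · right
      have hβα : β = -(Complex.I * α) := by
        linear_combination Complex.I*h + β*Complex.I_sq
      rw [hη, hβα, smul_sub, smul_smul, mul_comm α Complex.I, neg_smul, sub_eq_add_neg]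

lemma mk_u (z t : ℂ × ℂ × ℂ) (ht : dot3 t t ≠ 0) (hzt : dot3 z t = 0) :
    ∃ u : ℂ × ℂ × ℂ, dot3 u u = 1 ∧ dot3 z u = 0 := by
  obtain ⟨s, hs⟩ : ∃ s : ℂ, s ^ 2 = dot3 t t := by
    exact ⟨(dot3 t t) ^ ((2:ℂ)⁻¹), by
      have := Complex.cpow_nat_inv_pow (dot3 t t) (two_ne_zero)
      simpa using this⟩
  have hs0 : s ≠ 0 := by
    intro h; rw [h] at hs; simp at hs; exact ht hs.symm
  refine ⟨s⁻¹ • t, ?_, ?_⟩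
  · simp only [dot3, Prod.smul_fst, Prod.smul_snd, smul_eq_mul] at *
    field_simp
    linear_combination -hs
  · simp only [dot3, Prod.smul_fst, Prod.smul_snd, smul_eq_mul] at *
    linear_combination s⁻¹ * hzt


/-- Through every point of the complex sphere S²_ℂ there pass exactly two
characteristic directions: the set of η ≠ 0 with η·η = 0 and z·η = 0 is the
union of exactly two distinct complex lines through the origin (minus 0). -/
theorem two_characteristic_directions (z : ℂ × ℂ × ℂ) (hz : dot3 z z = 1) :
    ∃ η₁ η₂ : ℂ × ℂ × ℂ,
      (η₁ ≠ 0 ∧ dot3 η₁ η₁ = 0 ∧ dot3 z η₁ = 0) ∧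
      (η₂ ≠ 0 ∧ dot3 η₂ η₂ = 0 ∧ dot3 z η₂ = 0) ∧
      (∀ c : ℂ, η₁ ≠ c • η₂) ∧
      (∀ η : ℂ × ℂ × ℂ, η ≠ 0 → dot3 η η = 0 → dot3 z η = 0 →
        ∃ c : ℂ, c ≠ 0 ∧ (η = c • η₁ ∨ η = c • η₂)) := by

  obtain ⟨u, hu, hzu⟩ : ∃ u : ℂ × ℂ × ℂ, dot3 u u = 1 ∧ dot3 z u = 0 := by
    set t1 : ℂ × ℂ × ℂ := (0, z.2.2, -z.2.1) with ht1
    set t2 : ℂ × ℂ × ℂ := (-z.2.2, 0, z.1) with ht2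
    set t3 : ℂ × ℂ × ℂ := (z.2.1, -z.1, 0) with ht3
    have hz1 : dot3 z t1 = 0 := by simp only [dot3, ht1]; ring
    have hz2 : dot3 z t2 = 0 := by simp only [dot3, ht2]; ring
    have hz3 : dot3 z t3 = 0 := by simp only [dot3, ht3]; ring
    by_cases h1 : dot3 t1 t1 = 0
    · by_cases h2 : dot3 t2 t2 = 0
      · have h3 : dot3 t3 t3 ≠ 0 := by
          intro h3
          simp only [dot3, ht1, ht2, ht3] at h1 h2 h3 hz
          have : (2:ℂ) = 0 := by linear_combination h1 + h2 + h3 - 2*hz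
          norm_num at this
        exact mk_u z t3 h3 hz3
      · exact mk_u z t2 h2 hz2
    · exact mk_u z t1 h1 hz1
  exact key z u hz hu hzu
end

section
/- Every characteristic line of the complex sphere intersects the real sphere S² at exactly one point; that is, if z' ∈ S²_ℂ, η ∈ ℂ³ \ {0} satisfy z'·z' = 1, η·η = 0, z'·η = 0, then there is a unique c ∈ ℂ such that z' + cη has all three coordinates real (and then automatically lies on S² ⊂ ℝ³). -/
/-- A point of ℂ³ is real if all three coordinates have zero imaginary part. -/
def isRealPt (z : ℂ × ℂ × ℂ) : Prop := z.1.im = 0 ∧ z.2.1.im = 0 ∧ z.2.2.im = 0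

/-!
Write `z' = x + iy` and `η = a + ib` with `x, y, a, b ∈ ℝ³`. Since `η·η = 0` and `η ≠ 0`, the
vectors `a, b` are orthogonal of the same nonzero length, so they span a plane `P`, and
`Im (z' + cη) = y + (Im c) a + (Re c) b` is injective in `c`; this gives uniqueness. For existence
take `c` with `Im (z' + cη) ∈ Pᗮ`. The point `ζ = u + iw = z' + cη` still satisfies `ζ·ζ = 1` and
`ζ·η = 0`; as `w ⊥ P`, the latter forces `u ⊥ P`. In `ℝ³` the complement `Pᗮ` is a line, so
`u·w = 0` (the imaginary part of `ζ·ζ = 1`) makes `u` or `w` vanish, and `|u|² - |w|² = 1`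
excludes `u = 0`. Hence `w = 0`.
-/

open Module Submodule
open scoped InnerProductSpace

section InnerProductSpace

variable {𝕜 E : Type*} [RCLike 𝕜] [NormedAddCommGroup E] [InnerProductSpace 𝕜 E]

theorem mem_orthogonal_span_pair_iff {a b u : E} :
    u ∈ (span 𝕜 {a, b})ᗮ ↔ ⟪a, u⟫_𝕜 = 0 ∧ ⟪b, u⟫_𝕜 = 0 := by
  rw [span_insert, ← inf_orthogonal, mem_inf, mem_orthogonal_singleton_iff_inner_right,
    mem_orthogonal_singleton_iff_inner_right]

theorem exists_add_smul_add_smul_mem_orthogonal [FiniteDimensional 𝕜 E] (y a b : E) :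
    ∃ s t : 𝕜, y + s • a + t • b ∈ (span 𝕜 {a, b})ᗮ := by
  obtain ⟨s, t, hst⟩ := mem_span_pair.mp ((span 𝕜 {a, b}).starProjection_apply_mem y)
  refine ⟨-s, -t, ?_⟩
  convert (span 𝕜 {a, b}).sub_starProjection_mem_orthogonal y using 1
  rw [← hst]
  module

theorem mem_span_singleton_of_mem_orthogonal_span_pair (hE : finrank 𝕜 E = 3) {a b u w : E}
    (hab : LinearIndependent 𝕜 ![a, b]) (hu : u ∈ (span 𝕜 {a, b})ᗮ)
    (hw : w ∈ (span 𝕜 {a, b})ᗮ) (hu0 : u ≠ 0) : w ∈ 𝕜 ∙ u := by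
  have : FiniteDimensional 𝕜 E := .of_finrank_eq_succ hE
  have hspan : finrank 𝕜 (span 𝕜 {a, b}) = 2 := by
    rw [← Matrix.range_cons_cons_empty a b ![], finrank_span_eq_card hab, Fintype.card_fin]
  have hperp : finrank 𝕜 (span 𝕜 {a, b})ᗮ = 1 :=
    finrank_add_finrank_orthogonal' (by omega)
  rwa [← eq_span_singleton_of_mem_of_finrank_eq_one hperp hu hu0]

theorem eq_zero_of_mem_orthogonal_span_pair (hE : finrank 𝕜 E = 3) {a b u w : E}
    (hab : LinearIndependent 𝕜 ![a, b]) (hu : u ∈ (span 𝕜 {a, b})ᗮ)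
    (hw : w ∈ (span 𝕜 {a, b})ᗮ) (hu0 : u ≠ 0) (huw : ⟪u, w⟫_𝕜 = 0) : w = 0 := by
  obtain ⟨r, rfl⟩ := mem_span_singleton.mp
    (mem_span_singleton_of_mem_orthogonal_span_pair hE hab hu hw hu0)
  rw [inner_smul_right, mul_eq_zero, inner_self_eq_zero] at huw
  simp [huw.resolve_right hu0]

end InnerProductSpace

def reVec (z : ℂ × ℂ × ℂ) : EuclideanSpace ℝ (Fin 3) := !₂[z.1.re, z.2.1.re, z.2.2.re]

def imVec (z : ℂ × ℂ × ℂ) : EuclideanSpace ℝ (Fin 3) := !₂[z.1.im, z.2.1.im, z.2.2.im]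

theorem dot3_re (z w : ℂ × ℂ × ℂ) :
    (dot3 z w).re = ⟪reVec z, reVec w⟫_ℝ - ⟪imVec z, imVec w⟫_ℝ := by
  simp only [dot3, reVec, imVec, PiLp.inner_apply, RCLike.inner_apply, conj_trivial,
    Fin.sum_univ_three, Matrix.cons_val_zero, Matrix.cons_val_one, Matrix.cons_val,
    Complex.add_re, Complex.mul_re]
  ring

theorem dot3_im (z w : ℂ × ℂ × ℂ) :
    (dot3 z w).im = ⟪reVec z, imVec w⟫_ℝ + ⟪imVec z, reVec w⟫_ℝ := by
  simp only [dot3, reVec, imVec, PiLp.inner_apply, RCLike.inner_apply, conj_trivial,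
    Fin.sum_univ_three, Matrix.cons_val_zero, Matrix.cons_val_one, Matrix.cons_val,
    Complex.add_im, Complex.mul_im]
  ring

theorem eq_zero_of_reVec_eq_zero_of_imVec_eq_zero {z : ℂ × ℂ × ℂ} (hre : reVec z = 0)
    (him : imVec z = 0) : z = 0 := by
  simp only [reVec, imVec, WithLp.ext_iff, WithLp.ofLp_zero, funext_iff, Fin.forall_fin_succ,
    Pi.zero_apply, Matrix.cons_val_zero, Matrix.cons_val_succ, Matrix.cons_val_fin_one,
    forall_const] at hre him
  ext <;> simp [Complex.ext_iff, *]

theorem isRealPt_iff_imVec_eq_zero {z : ℂ × ℂ × ℂ} : isRealPt z ↔ imVec z = 0 := by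
  simp [isRealPt, imVec, WithLp.ext_iff, funext_iff, Fin.forall_fin_succ]

theorem imVec_add_smul (z η : ℂ × ℂ × ℂ) (c : ℂ) :
    imVec (z + c • η) = imVec z + c.im • reVec η + c.re • imVec η := by
  ext i
  fin_cases i <;>
    simp only [imVec, reVec, PiLp.add_apply, PiLp.smul_apply, Fin.reduceFinMk, Fin.zero_eta,
      Fin.mk_one, Matrix.cons_val, Matrix.cons_val_zero, Matrix.cons_val_one, Prod.fst_add,
      Prod.snd_add, Prod.smul_fst, Prod.smul_snd, smul_eq_mul, Complex.add_im, Complex.mul_im] <;>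
    ring

theorem dot3_add_smul_left (z w η : ℂ × ℂ × ℂ) (c : ℂ) :
    dot3 (z + c • η) w = dot3 z w + c * dot3 η w := by
  simp only [dot3, Prod.fst_add, Prod.snd_add, Prod.smul_fst, Prod.smul_snd, smul_eq_mul]
  ring

theorem dot3_self_add_smul_eq_one {z η : ℂ × ℂ × ℂ} (c : ℂ) (hz : dot3 z z = 1)
    (hηη : dot3 η η = 0) (hzη : dot3 z η = 0) : dot3 (z + c • η) (z + c • η) = 1 := by
  simp only [dot3, Prod.fst_add, Prod.snd_add, Prod.smul_fst, Prod.smul_snd, smul_eq_mul] at *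
  linear_combination hz + 2 * c * hzη + c ^ 2 * hηη

theorem linearIndependent_reVec_imVec {η : ℂ × ℂ × ℂ} (hη : η ≠ 0) (hηη : dot3 η η = 0) :
    LinearIndependent ℝ ![reVec η, imVec η] := by
  have hnorm : ⟪reVec η, reVec η⟫_ℝ = ⟪imVec η, imVec η⟫_ℝ := by
    have hre := dot3_re η η
    rw [hηη, Complex.zero_re] at hre
    linarith
  have horth : ⟪reVec η, imVec η⟫_ℝ = 0 := by
    have him := dot3_im η η
    rw [hηη, Complex.zero_im, real_inner_comm (reVec η)] at him
    linarith
  have ha : reVec η ≠ 0 := fun h ↦ hη <| eq_zero_of_reVec_eq_zero_of_imVec_eq_zero h <| by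
    rwa [h, inner_zero_left, eq_comm, inner_self_eq_zero] at hnorm
  refine (LinearIndependent.pair_iff' ha).mpr fun r hr ↦ ha ?_
  rw [← hr, inner_smul_right, mul_eq_zero, inner_self_eq_zero] at horth
  rwa [← hr, horth.resolve_right ha, zero_smul, inner_zero_left, inner_self_eq_zero] at hnorm

theorem exists_isRealPt_add_smul {z η : ℂ × ℂ × ℂ}
    (hind : LinearIndependent ℝ ![reVec η, imVec η]) (hz : dot3 z z = 1) (hηη : dot3 η η = 0)
    (hzη : dot3 z η = 0) : ∃ c : ℂ, isRealPt (z + c • η) := by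
  obtain ⟨s, t, hw⟩ :=
    exists_add_smul_add_smul_mem_orthogonal (𝕜 := ℝ) (imVec z) (reVec η) (imVec η)
  refine ⟨⟨t, s⟩, isRealPt_iff_imVec_eq_zero.mpr ?_⟩
  set ζ := z + (⟨t, s⟩ : ℂ) • η
  replace hw : imVec ζ ∈ (span ℝ {reVec η, imVec η})ᗮ := by rwa [imVec_add_smul]
  have hζζ := dot3_self_add_smul_eq_one ⟨t, s⟩ hz hηη hzη
  have hζη : dot3 ζ η = 0 := by rw [dot3_add_smul_left, hzη, hηη, mul_zero, add_zero]
  have hu : reVec ζ ∈ (span ℝ {reVec η, imVec η})ᗮ := by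
    rw [mem_orthogonal_span_pair_iff] at hw ⊢
    have hre := dot3_re ζ η
    have him := dot3_im ζ η
    rw [hζη, Complex.zero_re, real_inner_comm (imVec η), hw.2] at hre
    rw [hζη, Complex.zero_im, real_inner_comm (reVec η), hw.1] at him
    constructor <;>
      linarith [real_inner_comm (reVec ζ) (reVec η), real_inner_comm (reVec ζ) (imVec η)]
  have hu0 : reVec ζ ≠ 0 := by
    intro h
    have hre := dot3_re ζ ζ
    rw [hζζ, h, inner_zero_left, Complex.one_re] at hre
    linarith [real_inner_self_nonneg (x := imVec ζ)]
  have huw : ⟪reVec ζ, imVec ζ⟫_ℝ = 0 := by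
    have him := dot3_im ζ ζ
    rw [hζζ, Complex.one_im] at him
    linarith [real_inner_comm (reVec ζ) (imVec ζ)]
  exact eq_zero_of_mem_orthogonal_span_pair finrank_euclideanSpace_fin hind hu hw hu0 huw

theorem eq_of_isRealPt_add_smul {z η : ℂ × ℂ × ℂ}
    (hind : LinearIndependent ℝ ![reVec η, imVec η]) {c d : ℂ} (hc : isRealPt (z + c • η))
    (hd : isRealPt (z + d • η)) : c = d := by
  rw [isRealPt_iff_imVec_eq_zero, imVec_add_smul] at hc hd
  obtain ⟨him, hre⟩ := LinearIndependent.pair_iff.mp hind (c.im - d.im) (c.re - d.re)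
    (by linear_combination (norm := module) hc - hd)
  exact Complex.ext (sub_eq_zero.mp hre) (sub_eq_zero.mp him)

theorem sum_sq_re_eq_one_of_isRealPt {ζ : ℂ × ℂ × ℂ} (hζ : isRealPt ζ) (h : dot3 ζ ζ = 1) :
    ζ.1.re ^ 2 + ζ.2.1.re ^ 2 + ζ.2.2.re ^ 2 = 1 := by
  obtain ⟨h1, h2, h3⟩ := hζ
  have hre := congrArg Complex.re h
  simp only [dot3, Complex.add_re, Complex.mul_re, h1, h2, h3, Complex.one_re] at hre
  linear_combination hre

/-- Every characteristic line of the complex sphere meets the real sphere S² at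
exactly one point: there is a unique c with z' + cη real, and this real point
automatically has unit norm. -/
theorem characteristic_line_meets_real_sphere (z' η : ℂ × ℂ × ℂ) (hη : η ≠ 0)
    (hz' : dot3 z' z' = 1) (hηη : dot3 η η = 0) (hz'η : dot3 z' η = 0) :
    (∃! c : ℂ, isRealPt (z' + c • η)) ∧
      (∀ c : ℂ, isRealPt (z' + c • η) →
        ((z' + c • η).1.re) ^ 2 + ((z' + c • η).2.1.re) ^ 2
          + ((z' + c • η).2.2.re) ^ 2 = 1) := by
  have hind := linearIndependent_reVec_imVec hη hηη
  obtain ⟨c, hc⟩ := exists_isRealPt_add_smul hind hz' hηη hz'η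
  exact ⟨⟨c, hc, fun d hd ↦ eq_of_isRealPt_add_smul hind hd hc⟩,
    fun d hd ↦ sum_sq_re_eq_one_of_isRealPt hd (dot3_self_add_smul_eq_one d hz' hηη hz'η)⟩
end

section
/- The map Ψ₊ from directions at infinity to the real sphere, given in the β-coordinate by Ψ₊(β) = (θ₊(β), φ₊(β)) with θ₊(β) = 2 arctan(|e^{iβ}|) and φ₊(β) = Re(β) − π/2, produces a point x = (sin θ₊ cos φ₊, sin θ₊ sin φ₊, cos θ₊) ∈ S² satisfying x·η(β) = 0, where η(β) = (cos β, sin β, i). -/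
open Real Complex

/-!
With `t = |e^{iβ}| = e^{-Im β}` and `θ₊ = 2 arctan t`, the half-angle formulas give
`cot θ₊ = (1 - t²) / (2t) = sinh (Im β)`. On the other hand
`x · η(β) = sin θ₊ cos (β - φ₊) + i cos θ₊`, and `β - φ₊ = π/2 + i Im β` makes
`cos (β - φ₊) = -i sinh (Im β)`, so `x · η(β) = i (cos θ₊ - sin θ₊ sinh (Im β)) = 0`.
-/

namespace Real

theorem sin_two_mul_arctan (x : ℝ) : sin (2 * arctan x) = 2 * x / (1 + x ^ 2) := by
  have hpos : 0 < √(1 + x ^ 2) := sqrt_pos.mpr (by positivity)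
  rw [sin_two_mul, sin_arctan, cos_arctan]
  field_simp
  rw [sq_sqrt (by positivity)]

theorem cos_two_mul_arctan (x : ℝ) : cos (2 * arctan x) = (1 - x ^ 2) / (1 + x ^ 2) := by
  have hpos : 0 < 1 + x ^ 2 := by positivity
  rw [cos_two_mul, cos_sq_arctan]
  field_simp
  ring

theorem cos_two_mul_arctan_exp_neg (y : ℝ) :
    cos (2 * arctan (exp (-y))) = sin (2 * arctan (exp (-y))) * sinh y := by
  have ht : 0 < exp (-y) := exp_pos _
  rw [cos_two_mul_arctan, sin_two_mul_arctan, sinh_eq, ← inv_inv (exp y), ← exp_neg]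
  field_simp

theorem spherical_norm_sq (θ φ : ℝ) :
    (sin θ * cos φ) ^ 2 + (sin θ * sin φ) ^ 2 + cos θ ^ 2 = 1 := by
  linear_combination sin θ ^ 2 * sin_sq_add_cos_sq φ + sin_sq_add_cos_sq θ

end Real

namespace Complex

theorem cos_sub_re_add_pi_div_two (β : ℂ) :
    cos (β - ((β.re - π / 2 : ℝ) : ℂ)) = -(Real.sinh β.im : ℂ) * I := by
  have hβ : β - ((β.re - π / 2 : ℝ) : ℂ) = β.im * I + (π / 2 : ℝ) := by
    apply Complex.ext <;> simp
  rw [hβ, ofReal_div, ofReal_ofNat, cos_add_pi_div_two, sin_mul_I, neg_mul, ofReal_sinh]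

theorem spherical_dotProduct_eta (θ : ℝ) (β : ℂ) :
    ((Real.sin θ * Real.cos (β.re - π / 2) : ℝ) : ℂ) * cos β
      + ((Real.sin θ * Real.sin (β.re - π / 2) : ℝ) : ℂ) * sin β + (Real.cos θ : ℂ) * I
      = I * ((Real.cos θ - Real.sin θ * Real.sinh β.im : ℝ) : ℂ) := by
  have hcos := cos_sub β ((β.re - π / 2 : ℝ) : ℂ)
  rw [cos_sub_re_add_pi_div_two] at hcos
  push_cast at hcos ⊢
  linear_combination -sin (θ : ℂ) * hcos

end Complex

/-- The map Ψ₊, given in the β-coordinate by θ₊(β) = 2 arctan |e^{iβ}| and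
φ₊(β) = Re β − π/2, produces a point
x = (sin θ₊ cos φ₊, sin θ₊ sin φ₊, cos θ₊) of the real sphere satisfying
x·η(β) = 0 with η(β) = (cos β, sin β, i). -/
theorem psi_plus_lands_on_characteristic (β : ℂ) :
    letI θp : ℝ := 2 * Real.arctan ‖Complex.exp (Complex.I * β)‖
    letI φp : ℝ := β.re - Real.pi / 2
    ((Real.sin θp * Real.cos φp : ℝ) : ℂ) * Complex.cos β
      + ((Real.sin θp * Real.sin φp : ℝ) : ℂ) * Complex.sin β
      + ((Real.cos θp : ℝ) : ℂ) * Complex.I = 0 ∧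
    (Real.sin θp * Real.cos φp) ^ 2 + (Real.sin θp * Real.sin φp) ^ 2
      + (Real.cos θp) ^ 2 = 1 := by
  have hnorm : ‖Complex.exp (Complex.I * β)‖ = Real.exp (-β.im) := by
    simp [Complex.norm_exp, Complex.mul_re]
  refine ⟨?_, Real.spherical_norm_sq _ _⟩
  rw [hnorm, Complex.spherical_dotProduct_eta, Real.cos_two_mul_arctan_exp_neg, sub_self,
    Complex.ofReal_zero, mul_zero]
end
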